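/- Let H be a finite-dimensional real inner product space, 𝐁 self-adjoint positive definite, 𝐀 positive semidefinite, σ ≥ 1/2, and let (τₙ)ₙ be positive time steps. If a sequence (yⁿ) in H satisfies 𝐁(y^{n+1} − yⁿ)/τ_{n+1} + 𝐀(σ y^{n+1} + (1−σ)yⁿ) = fⁿ for all n ≥ 0, then for every n, ‖y^{n+1}‖_𝐁 ≤ ‖y⁰‖_𝐁 + Σ_{k=0}^{n} τ_{k+1} ‖f^k‖_{𝐁⁻¹}. -/

import Mathlib

/-! Pairing the scheme with `w = σ y⁺ + (1 - σ) y` gives the energy identity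
`⟪B (y⁺ - y), w⟫ = (‖y⁺‖²_B - ‖y‖²_B) / 2 + (σ - 1/2) ‖y⁺ - y‖²_B`, while the right-hand side
is at most `τ ‖f‖_{B⁻¹} ‖w‖_B` and `‖w‖_B ≤ (‖y⁺‖_B + ‖y‖_B) / 2 + (σ - 1/2) ‖y⁺ - y‖_B`.
For `σ ≥ 1/2` these force the one-step bound `‖y⁺‖_B ≤ ‖y‖_B + τ ‖f‖_{B⁻¹}`, which
telescopes. -/

open InnerProductSpace

theorem le_add_of_sq_sub_sq_le {a b c d k : ℝ} (hb : 0 ≤ b) (hc : 0 ≤ c) (hk : 0 ≤ k)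
    (had : a ≤ b + d) (h : (a ^ 2 - b ^ 2) / 2 + k * d ^ 2 ≤ c * ((a + b) / 2 + k * d)) :
    a ≤ b + c := by
  by_contra! hlt
  have hcd : c < d := by linarith
  have hab : c * (a + b) < (a - b) * (a + b) :=
    mul_lt_mul_of_pos_right (by linarith) (by linarith)
  nlinarith [mul_nonneg (mul_nonneg hk (hc.trans hcd.le)) (sub_nonneg.2 hcd.le)]

section EnergyNorm

variable {H : Type*} [NormedAddCommGroup H] [InnerProductSpace ℝ H] {B : H →ₗ[ℝ] H}

noncomputable def energyNorm (B : H →ₗ[ℝ] H) (x : H) : ℝ := √⟪B x, x⟫_ℝ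

theorem energyNorm_nonneg (x : H) : 0 ≤ energyNorm B x := Real.sqrt_nonneg _

theorem energyNorm_smul (r : ℝ) (x : H) : energyNorm B (r • x) = |r| * energyNorm B x := by
  rw [energyNorm, energyNorm, map_smul, real_inner_smul_left, real_inner_smul_right, ← mul_assoc,
    ← sq, Real.sqrt_mul (sq_nonneg r), Real.sqrt_sq_eq_abs]

theorem LinearMap.IsSymmetric.inner_apply_sub_smul_add_smul (hB : B.IsSymmetric) (σ : ℝ)
    (x y : H) :
    ⟪B (x - y), σ • x + (1 - σ) • y⟫_ℝ =
      (⟪B x, x⟫_ℝ - ⟪B y, y⟫_ℝ) / 2 + (σ - 1 / 2) * ⟪B (x - y), x - y⟫_ℝ := by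
  have hxy : ⟪B y, x⟫_ℝ = ⟪B x, y⟫_ℝ := by rw [hB y x, real_inner_comm]
  simp only [map_sub, inner_sub_left, inner_add_right, inner_sub_right, real_inner_smul_right,
    hxy]
  ring

namespace LinearMap.IsPositive

abbrev preInnerProductCore (hB : B.IsPositive) : PreInnerProductSpace.Core ℝ H where
  inner x y := ⟪B x, y⟫_ℝ
  conj_inner_symm x y := by simp [hB.isSymmetric x y, real_inner_comm]
  re_inner_nonneg x := hB.2 x
  add_left x y z := by simp [inner_add_left]
  smul_left x y r := by simp [inner_smul_left]

theorem sq_energyNorm (hB : B.IsPositive) (x : H) : energyNorm B x ^ 2 = ⟪B x, x⟫_ℝ :=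
  Real.sq_sqrt (hB.2 x)

theorem energyNorm_add_le (hB : B.IsPositive) (x y : H) :
    energyNorm B (x + y) ≤ energyNorm B x + energyNorm B y :=
  letI := hB.preInnerProductCore
  letI := InnerProductSpace.Core.toSeminormedAddCommGroup (𝕜 := ℝ) (F := H)
  norm_add_le x y

theorem inner_le_energyNorm_mul_energyNorm (hB : B.IsPositive) (x y : H) :
    ⟪B x, y⟫_ℝ ≤ energyNorm B x * energyNorm B y :=
  (le_abs_self _).trans
    (InnerProductSpace.Core.norm_inner_le_norm (c := hB.preInnerProductCore) x y)

theorem inner_le_sqrt_inner_mul_energyNorm (hB : B.IsPositive) {f g : H} (hg : B g = f)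
    (w : H) :
    ⟪f, w⟫_ℝ ≤ √⟪g, f⟫_ℝ * energyNorm B w := by
  have hfg : energyNorm B g = √⟪g, f⟫_ℝ := by rw [energyNorm, hg, real_inner_comm]
  rw [← hfg, ← hg]
  exact hB.inner_le_energyNorm_mul_energyNorm g w

theorem energyNorm_smul_add_smul_le (hB : B.IsPositive) {σ : ℝ} (hσ : 1 / 2 ≤ σ) (x y : H) :
    energyNorm B (σ • x + (1 - σ) • y) ≤
      (energyNorm B x + energyNorm B y) / 2 + (σ - 1 / 2) * energyNorm B (x - y) := by
  have hw : σ • x + (1 - σ) • y = (1 / 2 : ℝ) • (x + y) + (σ - 1 / 2) • (x - y) := by module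
  calc energyNorm B (σ • x + (1 - σ) • y)
      ≤ energyNorm B ((1 / 2 : ℝ) • (x + y)) + energyNorm B ((σ - 1 / 2) • (x - y)) := by
        rw [hw]; exact hB.energyNorm_add_le _ _
    _ = |1 / 2| * energyNorm B (x + y) + |σ - 1 / 2| * energyNorm B (x - y) := by
        rw [energyNorm_smul, energyNorm_smul]
    _ ≤ (energyNorm B x + energyNorm B y) / 2 + (σ - 1 / 2) * energyNorm B (x - y) := by
        rw [abs_of_pos one_half_pos, abs_of_nonneg (sub_nonneg.2 hσ)]
        linarith [hB.energyNorm_add_le x y]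

theorem energyNorm_le_add_of_inner_le (hB : B.IsPositive) {σ c : ℝ} (hσ : 1 / 2 ≤ σ) (hc : 0 ≤ c)
    {x y : H} (h : ⟪B (x - y), σ • x + (1 - σ) • y⟫_ℝ ≤ c * energyNorm B (σ • x + (1 - σ) • y)) :
    energyNorm B x ≤ energyNorm B y + c := by
  have hx : energyNorm B x ≤ energyNorm B y + energyNorm B (x - y) := by
    simpa using hB.energyNorm_add_le y (x - y)
  refine le_add_of_sq_sub_sq_le (energyNorm_nonneg _) hc (sub_nonneg.2 hσ) hx ?_
  rw [hB.sq_energyNorm, hB.sq_energyNorm, hB.sq_energyNorm,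
    ← hB.isSymmetric.inner_apply_sub_smul_add_smul]
  exact h.trans (mul_le_mul_of_nonneg_left (hB.energyNorm_smul_add_smul_le hσ x y) hc)

theorem energyNorm_le_add_of_scheme_step (hB : B.IsPositive) {A : H →ₗ[ℝ] H}
    (hA : ∀ x, 0 ≤ ⟪A x, x⟫_ℝ) {σ τ : ℝ} (hσ : 1 / 2 ≤ σ) (hτ : 0 < τ) {x y f g : H} (hg : B g = f)
    (hstep : (1 / τ) • B (x - y) + A (σ • x + (1 - σ) • y) = f) :
    energyNorm B x ≤ energyNorm B y + τ * √⟪g, f⟫_ℝ := by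
  set w := σ • x + (1 - σ) • y
  refine hB.energyNorm_le_add_of_inner_le hσ (by positivity) ?_
  calc ⟪B (x - y), w⟫_ℝ = τ * (⟪f, w⟫_ℝ - ⟪A w, w⟫_ℝ) := by
        rw [← hstep, inner_add_left, real_inner_smul_left]
        field_simp
        ring
    _ ≤ τ * (√⟪g, f⟫_ℝ * energyNorm B w) := by
        gcongr
        linarith [hA w, hB.inner_le_sqrt_inner_mul_energyNorm hg w]
    _ = τ * √⟪g, f⟫_ℝ * energyNorm B w := by ring

end LinearMap.IsPositive

end EnergyNorm

theorem stmt_7_general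
    {H : Type*} [NormedAddCommGroup H] [InnerProductSpace ℝ H]
    (B Binv A : H →ₗ[ℝ] H)
    (hBsa : ∀ x y : H, ⟪B x, y⟫_ℝ = ⟪x, B y⟫_ℝ)
    (hBpd : ∀ x : H, x ≠ 0 → 0 < ⟪B x, x⟫_ℝ)
    (hinv₁ : ∀ x : H, B (Binv x) = x)
    (hApsd : ∀ x : H, 0 ≤ ⟪A x, x⟫_ℝ)
    (σ : ℝ) (hσ : 1 / 2 ≤ σ)
    (τ : ℕ → ℝ) (hτ : ∀ n, 0 < τ n)
    (y f : ℕ → H)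
    (hscheme : ∀ n : ℕ,
      (1 / τ (n + 1)) • B (y (n + 1) - y n) + A (σ • y (n + 1) + (1 - σ) • y n) = f n) :
    ∀ n : ℕ,
      Real.sqrt ⟪B (y (n + 1)), y (n + 1)⟫_ℝ ≤
        Real.sqrt ⟪B (y 0), y 0⟫_ℝ +
          ∑ k ∈ Finset.range (n + 1), τ (k + 1) * Real.sqrt ⟪Binv (f k), f k⟫_ℝ := by
  have hB : B.IsPositive := ⟨hBsa, fun x => by
    rcases eq_or_ne x 0 with rfl | hx
    · simp
    · exact (hBpd x hx).le⟩
  have step (k : ℕ) : energyNorm B (y (k + 1)) - energyNorm B (y k) ≤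
      τ (k + 1) * √⟪Binv (f k), f k⟫_ℝ := by
    linarith [hB.energyNorm_le_add_of_scheme_step hApsd hσ (hτ (k + 1)) (hinv₁ (f k)) (hscheme k)]
  intro n
  have hsum := Finset.sum_le_sum fun k (_ : k ∈ Finset.range (n + 1)) => step k
  rw [Finset.sum_range_sub (fun k => energyNorm B (y k))] at hsum
  simp only [energyNorm] at hsum
  linarith

theorem stmt_7
    {H : Type*} [NormedAddCommGroup H] [InnerProductSpace ℝ H] [FiniteDimensional ℝ H]
    (B Binv A : H →ₗ[ℝ] H)
    (hBsa : ∀ x y : H, ⟪B x, y⟫_ℝ = ⟪x, B y⟫_ℝ)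
    (hBpd : ∀ x : H, x ≠ 0 → 0 < ⟪B x, x⟫_ℝ)
    (hinv₁ : ∀ x : H, B (Binv x) = x) (hinv₂ : ∀ x : H, Binv (B x) = x)
    (hApsd : ∀ x : H, 0 ≤ ⟪A x, x⟫_ℝ)
    (σ : ℝ) (hσ : 1 / 2 ≤ σ)
    (τ : ℕ → ℝ) (hτ : ∀ n, 0 < τ n)
    (y f : ℕ → H)
    (hscheme : ∀ n : ℕ,
      (1 / τ (n + 1)) • B (y (n + 1) - y n) + A (σ • y (n + 1) + (1 - σ) • y n) = f n) :
    ∀ n : ℕ,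
      Real.sqrt ⟪B (y (n + 1)), y (n + 1)⟫_ℝ ≤
        Real.sqrt ⟪B (y 0), y 0⟫_ℝ +
          ∑ k ∈ Finset.range (n + 1), τ (k + 1) * Real.sqrt ⟪Binv (f k), f k⟫_ℝ :=
  stmt_7_general B Binv A hBsa hBpd hinv₁ hApsd σ hσ τ hτ y f hscheme
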